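/- arXiv:1705.00800 — 7 statements merged into one kernel-verified Lean document; each statement's English description precedes it below -/
import Mathlib

section
/- Every subgroup of the Klein bottle group Z⋊Z is either trivial, infinite cyclic, or of finite index; in particular every virtually cyclic subgroup of Z⋊Z is trivial or infinite cyclic. -/
/-- The Klein bottle group: underlying set `ℤ × ℤ` with multiplication
`(n₁,m₁)(n₂,m₂) = (n₁ + (-1)^{m₁} n₂, m₁ + m₂)`, identity `(0,0)`. -/
@[ext] structure KB where
  n : ℤ
  m : ℤ

namespace KB

instance : Mul KB := ⟨fun a b => ⟨a.n + (a.m.negOnePow : ℤ) * b.n, a.m + b.m⟩⟩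
instance : One KB := ⟨⟨0, 0⟩⟩
instance : Inv KB := ⟨fun a => ⟨((1 - a.m).negOnePow : ℤ) * a.n, -a.m⟩⟩

@[simp] theorem mul_def (a b : KB) :
    a * b = ⟨a.n + (a.m.negOnePow : ℤ) * b.n, a.m + b.m⟩ := rfl
@[simp] theorem one_def : (1 : KB) = ⟨0, 0⟩ := rfl
@[simp] theorem inv_def (a : KB) :
    a⁻¹ = ⟨((1 - a.m).negOnePow : ℤ) * a.n, -a.m⟩ := rfl

instance : Group KB where
  mul_assoc a b c := by
    ext <;> simp [Int.negOnePow_add] <;> ring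
  one_mul a := by ext <;> simp
  mul_one a := by ext <;> simp
  inv_mul_cancel a := by
    ext <;> simp [sub_eq_add_neg, Int.negOnePow_add]

theorem m_zpow (g : KB) (k : ℤ) : (g ^ k).m = k * g.m := by
  induction k using Int.induction_on with
  | zero => simp
  | succ i ih => rw [zpow_add_one]; simp only [mul_def]; rw [ih]; ring
  | pred i ih => rw [zpow_sub_one]; simp only [mul_def, inv_def]; rw [ih]; ring

theorem zpow_m_even (x m : ℤ) (hm : Even m) (k : ℤ) :
    (⟨x, m⟩ : KB) ^ k = ⟨k * x, k * m⟩ := by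
  induction k using Int.induction_on with
  | zero => simp
  | succ i ih =>
    rw [zpow_add_one, ih]
    ext <;> simp [Int.negOnePow_even _ (hm.mul_left i)] <;> push_cast <;> ring
  | pred i ih =>
    rw [zpow_sub_one, ih]
    obtain ⟨c, rfl⟩ := hm
    have h1 : ((1 - (c + c)).negOnePow : ℤ) = -1 := by
      rw [Int.negOnePow_odd _ ⟨-c, by ring⟩]; rfl
    have h2 : (((-(i:ℤ)) * (c + c)).negOnePow : ℤ) = 1 := by
      rw [Int.negOnePow_even _ ⟨-(i:ℤ)*c, by ring⟩]; rfl
    ext <;> simp only [mul_def, inv_def, h1, h2] <;> push_cast <;> ring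

end KB
theorem kb_subgroups (H : Subgroup KB) :
    (H = ⊥ ∨ (∃ g : KB, H = Subgroup.zpowers g ∧ (H : Set KB).Infinite) ∨ H.index ≠ 0) ∧
    ((∃ C : Subgroup ↥H, IsCyclic ↥C ∧ C.index ≠ 0) →
      H = ⊥ ∨ ∃ g : KB, H = Subgroup.zpowers g ∧ (H : Set KB).Infinite) := by
  classical
  set A : AddSubgroup ℤ :=
    { carrier := {m | ∃ x ∈ H, KB.m x = m}
      zero_mem' := ⟨1, H.one_mem, rfl⟩
      add_mem' := by
        rintro m1 m2 ⟨x, hx, rfl⟩ ⟨y, hy, rfl⟩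
        exact ⟨x * y, H.mul_mem hx hy, rfl⟩
      neg_mem' := by
        rintro m ⟨x, hx, rfl⟩
        exact ⟨x⁻¹, H.inv_mem hx, rfl⟩ } with hAdef
  set B : AddSubgroup ℤ :=
    { carrier := {n | (⟨n, 0⟩ : KB) ∈ H}
      zero_mem' := H.one_mem
      add_mem' := by
        intro n1 n2 h1 h2
        have h3 := H.mul_mem h1 h2
        rwa [show (⟨n1, 0⟩ : KB) * ⟨n2, 0⟩ = ⟨n1 + n2, 0⟩ from by ext <;> simp] at h3
      neg_mem' := by
        intro n h1
        have h3 := H.inv_mem h1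
        rwa [show (⟨n, 0⟩ : KB)⁻¹ = ⟨-n, 0⟩ from by ext <;> simp] at h3 } with hBdef
  obtain ⟨d, hA⟩ := Int.subgroup_cyclic A
  obtain ⟨e, hB⟩ := Int.subgroup_cyclic B
  have memA : ∀ x ∈ H, ∃ k : ℤ, x.m = k * d := by
    intro x hx
    have hx' : x.m ∈ A := ⟨x, hx, rfl⟩
    rw [hA, AddSubgroup.mem_closure_singleton] at hx'
    obtain ⟨k, hk⟩ := hx'
    exact ⟨k, by rw [← hk]; simp⟩
  have memB : ∀ n : ℤ, (⟨n, 0⟩ : KB) ∈ H → ∃ k : ℤ, n = k * e := by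
    intro n hn
    have hn' : n ∈ B := hn
    rw [hB, AddSubgroup.mem_closure_singleton] at hn'
    obtain ⟨k, hk⟩ := hn'
    exact ⟨k, by rw [← hk]; simp⟩
  have dA : ∃ x ∈ H, x.m = d := by
    have : d ∈ A := by rw [hA]; exact AddSubgroup.mem_closure_singleton_self d
    exact this
  have eB : (⟨e, 0⟩ : KB) ∈ H := by
    have : e ∈ B := by rw [hB]; exact AddSubgroup.mem_closure_singleton_self e
    exact this
  have main : H = ⊥ ∨ (∃ g : KB, H = Subgroup.zpowers g ∧ (H : Set KB).Infinite) ∨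
      H.index ≠ 0 := by
    by_cases hd : d = 0
    · subst hd
      have hm0 : ∀ x ∈ H, x.m = 0 := fun x hx => by
        obtain ⟨k, hk⟩ := memA x hx; simpa using hk
      by_cases he : e = 0
      · left
        rw [eq_bot_iff]
        intro x hx
        have h1 := hm0 x hx
        have h2 : (⟨x.n, 0⟩ : KB) ∈ H := by
          rwa [show (⟨x.n, 0⟩ : KB) = x from by ext <;> simp [h1]]
        obtain ⟨k, hk⟩ := memB _ h2
        rw [he, mul_zero] at hk
        have hx1 : x = 1 := by ext <;> simp [hk, h1]
        simp [hx1]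
      · right; left
        refine ⟨⟨e, 0⟩, le_antisymm ?_ (Subgroup.zpowers_le.mpr eB), ?_⟩
        · intro x hx
          have h1 := hm0 x hx
          have h2 : (⟨x.n, 0⟩ : KB) ∈ H := by
            rwa [show (⟨x.n, 0⟩ : KB) = x from by ext <;> simp [h1]]
          obtain ⟨k, hk⟩ := memB _ h2
          refine Subgroup.mem_zpowers_iff.mpr ⟨k, ?_⟩
          rw [KB.zpow_m_even e 0 Even.zero k]
          ext <;> simp [hk.symm, h1]
        · apply Set.infinite_of_injective_forall_mem
            (f := fun k : ℤ => (⟨k * e, 0⟩ : KB))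
          · intro k1 k2 hk
            have := congrArg KB.n hk
            exact mul_right_cancel₀ he this
          · intro k
            have : (⟨k * e, 0⟩ : KB) = (⟨e, 0⟩ : KB) ^ k := by
              rw [KB.zpow_m_even e 0 Even.zero k]; ext <;> simp
            rw [this]
            exact H.zpow_mem eB k
    · obtain ⟨h, hhH, hhm⟩ := dA
      by_cases he : e = 0
      · right; left
        refine ⟨h, le_antisymm ?_ (Subgroup.zpowers_le.mpr hhH), ?_⟩
        · intro x hx
          obtain ⟨k, hk⟩ := memA x hx
          have hyH : x * (h ^ k)⁻¹ ∈ H := H.mul_mem hx (H.inv_mem (H.zpow_mem hhH k))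
          have hym : (x * (h ^ k)⁻¹).m = 0 := by
            show x.m + -(h ^ k).m = 0
            rw [KB.m_zpow, hhm, hk]; ring
          have h2 : (⟨(x * (h ^ k)⁻¹).n, 0⟩ : KB) ∈ H := by
            rwa [show (⟨(x * (h ^ k)⁻¹).n, 0⟩ : KB) = x * (h ^ k)⁻¹ from
              KB.ext rfl hym.symm]
          obtain ⟨j, hj⟩ := memB _ h2
          rw [he, mul_zero] at hj
          have hy1 : x * (h ^ k)⁻¹ = 1 := KB.ext hj hym
          refine Subgroup.mem_zpowers_iff.mpr ⟨k, ?_⟩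
          have h4 : x * (h ^ k)⁻¹ * h ^ k = 1 * h ^ k := by rw [hy1]
          rw [inv_mul_cancel_right, one_mul] at h4; exact h4.symm
        · apply Set.infinite_of_injective_forall_mem (f := fun k : ℤ => h ^ k)
          · intro k1 k2 hk
            have := congrArg KB.m hk
            rw [KB.m_zpow, KB.m_zpow, hhm] at this
            exact mul_right_cancel₀ hd this
          · exact fun k => H.zpow_mem hhH k
      · right; right
        obtain ⟨D, hD, h', hh'H, hh'm⟩ : ∃ D : ℤ, 0 < D ∧ ∃ h' ∈ H, h'.m = D := by
          rcases lt_or_gt_of_ne hd with hneg | hpos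
          · exact ⟨-d, by omega, h⁻¹, H.inv_mem hhH, by show -h.m = -d; rw [hhm]⟩
          · exact ⟨d, hpos, h, hhH, hhm⟩
        obtain ⟨E, hE, hEH⟩ : ∃ E : ℤ, 0 < E ∧ (⟨E, 0⟩ : KB) ∈ H := by
          rcases lt_or_gt_of_ne he with hneg | hpos
          · refine ⟨-e, by omega, ?_⟩
            have := H.inv_mem eB
            rwa [show (⟨e, 0⟩ : KB)⁻¹ = ⟨-e, 0⟩ from by ext <;> simp] at this
          · exact ⟨e, hpos, eB⟩
        set c : ℤ := h'.n + ((h'.m).negOnePow : ℤ) * h'.n with hc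
        have hsqH : (⟨c, 2 * D⟩ : KB) ∈ H := by
          have : h' * h' = ⟨c, 2 * D⟩ := by
            ext
            · rfl
            · show h'.m + h'.m = 2 * D
              rw [hh'm]; ring
          exact this ▸ H.mul_mem hh'H hh'H
        have hfin : Finite (KB ⧸ H) := by
          have hsur : Function.Surjective
              (fun p : Fin E.toNat × Fin (2 * D).toNat =>
                (((⟨((p.1 : ℕ) : ℤ), ((p.2 : ℕ) : ℤ)⟩ : KB)) : KB ⧸ H)) := by
            intro z
            obtain ⟨x, rfl⟩ := QuotientGroup.mk_surjective z
            obtain ⟨n, m⟩ := x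
            have hDpos : (0 : ℤ) < 2 * D := by omega
            set s : ℤ := m % (2 * D) with hs
            set j : ℤ := m / (2 * D) with hj
            have hs0 : 0 ≤ s := Int.emod_nonneg m (by omega)
            have hslt : s < 2 * D := Int.emod_lt_of_pos m hDpos
            have hm : m = 2 * D * j + s := (Int.mul_ediv_add_emod m (2 * D)).symm
            set ε : ℤ := (s.negOnePow : ℤ) with hε
            have hεsq : ε * ε = 1 := by
              rw [hε, ← Units.val_mul, ← Int.negOnePow_add,
                Int.negOnePow_even _ ⟨s, rfl⟩]; rfl
            set t : ℤ := n - ε * j * c with ht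
            set r : ℤ := t % E with hr
            set k' : ℤ := t / E with hk'
            have hr0 : 0 ≤ r := Int.emod_nonneg t (by omega)
            have hrlt : r < E := Int.emod_lt_of_pos t hE
            have htE : n - ε * j * c = E * (t / E) + r := by
              rw [← ht]; exact (Int.mul_ediv_add_emod t E).symm
            refine ⟨(⟨r.toNat, by omega⟩, ⟨s.toNat, by omega⟩), ?_⟩
            show (((⟨((r.toNat : ℕ) : ℤ), ((s.toNat : ℕ) : ℤ)⟩ : KB)) : KB ⧸ H) = _
            rw [Int.toNat_of_nonneg hr0, Int.toNat_of_nonneg hs0]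
            rw [QuotientGroup.eq]
            have hkey : (⟨r, s⟩ : KB)⁻¹ * ⟨n, m⟩ =
                (⟨E, 0⟩ : KB) ^ (ε * k') * (⟨c, 2 * D⟩ : KB) ^ j := by
              rw [KB.zpow_m_even E 0 Even.zero, KB.zpow_m_even c (2 * D) ⟨D, by ring⟩]
              have h1 : ((1 - s).negOnePow : ℤ) = -ε := by
                rw [show (1 - s : ℤ) = 1 + -s from by ring, Int.negOnePow_add,
                  Int.negOnePow_neg, Units.val_mul, Int.negOnePow_one, hε]
                push_cast
                ring
              have h2 : ((-s).negOnePow : ℤ) = ε := by rw [Int.negOnePow_neg, hε]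
              ext
              · show ((1 - s).negOnePow : ℤ) * r + ((-s).negOnePow : ℤ) * n =
                  ε * k' * E + (((ε * k' * 0 : ℤ)).negOnePow : ℤ) * (j * c)
                rw [h1, h2, mul_zero, Int.negOnePow_zero, Units.val_one]
                rw [hk']
                linear_combination ε * htE + j * c * hεsq
              · show -s + m = ε * k' * 0 + j * (2 * D)
                linear_combination hm
            rw [hkey]
            exact H.mul_mem (H.zpow_mem hEH _) (H.zpow_mem hsqH _)
          exact Finite.of_surjective _ hsur
        exact Subgroup.index_ne_zero_of_finite
  refine ⟨main, fun hvc => ?_⟩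
  obtain ⟨C, hCcyc, hCidx⟩ := hvc
  rcases main with hbot | hcyc | hidx
  · exact Or.inl hbot
  · exact Or.inr hcyc
  · exfalso
    set K := C.map H.subtype with hKdef
    have hKle : K ≤ H := Subgroup.map_subtype_le C
    have h1 : K.subgroupOf H = C :=
      Subgroup.comap_map_eq_self_of_injective H.subtype_injective C
    have hKidx : K.index ≠ 0 := by
      have h2 := Subgroup.relIndex_mul_index hKle
      rw [Subgroup.relIndex, h1] at h2
      rw [← h2]
      exact mul_ne_zero hCidx hidx
    have hQfin : Finite (KB ⧸ K) := Nat.finite_of_card_ne_zero hKidx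
    have hKcyc : IsCyclic ↥K := by
      have e1 := Subgroup.equivMapOfInjective C H.subtype H.subtype_injective
      exact isCyclic_of_surjective e1.toMonoidHom e1.surjective
    obtain ⟨g0, hgen⟩ := hKcyc.exists_generator
    obtain ⟨n1, n2, hne, heq⟩ := Finite.exists_ne_map_eq_of_infinite
      (fun n : ℤ => (((⟨n, 0⟩ : KB)) : KB ⧸ K))
    have hpK : (⟨n2 - n1, 0⟩ : KB) ∈ K := by
      have h3 := QuotientGroup.eq.mp heq
      rwa [show (⟨n1, 0⟩ : KB)⁻¹ * ⟨n2, 0⟩ = ⟨n2 - n1, 0⟩ from by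
        ext <;> simp <;> ring] at h3
    obtain ⟨m1, m2, hmne, hmeq⟩ := Finite.exists_ne_map_eq_of_infinite
      (fun m : ℤ => (((⟨0, m⟩ : KB)) : KB ⧸ K))
    have hqK : (⟨0, m2 - m1⟩ : KB) ∈ K := by
      have h3 := QuotientGroup.eq.mp hmeq
      rwa [show (⟨0, m1⟩ : KB)⁻¹ * ⟨0, m2⟩ = ⟨0, m2 - m1⟩ from by
        ext <;> simp <;> ring] at h3
    obtain ⟨k1, hk1⟩ := Subgroup.mem_zpowers_iff.mp (hgen ⟨_, hpK⟩)
    obtain ⟨k2, hk2⟩ := Subgroup.mem_zpowers_iff.mp (hgen ⟨_, hqK⟩)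
    have hg1 : (g0 : KB) ^ k1 = ⟨n2 - n1, 0⟩ := by
      have := congrArg Subtype.val hk1
      simpa using this
    have hg2 : (g0 : KB) ^ k2 = ⟨0, m2 - m1⟩ := by
      have := congrArg Subtype.val hk2
      simpa using this
    have e1 : k1 * (g0 : KB).m = 0 := by
      have := congrArg KB.m hg1; rwa [KB.m_zpow] at this
    have e2 : k2 * (g0 : KB).m = m2 - m1 := by
      have := congrArg KB.m hg2; rwa [KB.m_zpow] at this
    by_cases hg0 : (g0 : KB).m = 0
    · rw [hg0, mul_zero] at e2
      exact hmne (by omega)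
    · have hk10 : k1 = 0 := by
        rcases mul_eq_zero.mp e1 with h3 | h3
        · exact h3
        · exact absurd h3 hg0
      rw [hk10, zpow_zero] at hg1
      have := congrArg KB.n hg1
      simp at this
      exact hne (by omega)
end

section
/- A line ℓ(a,b) in R² is an axis for some nontrivial element of Z⋊Z (i.e., is fixed setwise and translated along by that element) if and only if a ∈ Q ∪ {∞}; here ℓ(∞,b) denotes a vertical line. -/
namespace KB

/-- The action of the Klein bottle group on the plane:
`(n,m)·(t,r) = (n + (-1)^m t, m + r)`. -/
noncomputable def smul (g : KB) (p : ℝ × ℝ) : ℝ × ℝ :=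
  ((g.n : ℝ) + ((g.m.negOnePow : ℤ) : ℝ) * p.1, (g.m : ℝ) + p.2)

/-- The line `ℓ(a,b) = {(x, ax + b) : x ∈ ℝ}`. -/
def line (a b : ℝ) : Set (ℝ × ℝ) := {p | p.2 = a * p.1 + b}

/-- The vertical line `ℓ(∞,b) = {(b, y) : y ∈ ℝ}`. -/
def vline (b : ℝ) : Set (ℝ × ℝ) := {p | p.1 = b}

end KB

namespace KB

/-- `ℓ` is an axis for `g`: `g` fixes `ℓ` setwise and acts on it by translation. -/
noncomputable def isAxis (g : KB) (ℓ : Set (ℝ × ℝ)) : Prop :=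
  KB.smul g '' ℓ = ℓ ∧ ∃ v : ℝ × ℝ, ∀ p ∈ ℓ, KB.smul g p = p + v

end KB

theorem kb_axis_iff_rational :
    (∀ b : ℝ, ∃ g : KB, g ≠ 1 ∧ KB.isAxis g (KB.vline b)) ∧
    (∀ a b : ℝ, (∃ g : KB, g ≠ 1 ∧ KB.isAxis g (KB.line a b)) ↔ ∃ q : ℚ, a = (q : ℝ)) := by
  constructor
  · intro b
    have h2 : (((2:ℤ).negOnePow : ℤ) : ℝ) = 1 := by rw [show (2:ℤ) = 2*1 from rfl, Int.negOnePow_two_mul]; norm_num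
    refine ⟨⟨0, 2⟩, ?_, ?_, ⟨(0, 2), ?_⟩⟩
    · simp [KB.ext_iff]
    · ext p
      constructor
      · rintro ⟨q, hq, rfl⟩
        simpa [KB.smul, KB.vline, h2] using hq
      · intro hp
        exact ⟨(p.1, p.2 - 2), hp, by simp [KB.smul, h2]⟩
    · intro p hp
      simp [KB.smul, Prod.ext_iff, h2]
      ring
  · intro a b
    constructor
    · rintro ⟨g, hg, him, -⟩
      have key : ∀ x : ℝ, (g.m : ℝ) + (a * x + b) =
          a * ((g.n : ℝ) + ((g.m.negOnePow : ℤ) : ℝ) * x) + b := by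
        intro x
        have : KB.smul g (x, a * x + b) ∈ KB.line a b := by
          rw [← him]
          exact ⟨(x, a * x + b), rfl, rfl⟩
        simpa [KB.smul, KB.line] using this
      rcases Int.units_eq_one_or g.m.negOnePow with hε | hε
      · -- ε = 1 : m = a n
        have h0 := key 0
        rw [hε] at h0
        push_cast at h0
        have hm : (g.m : ℝ) = a * g.n := by linarith
        have hn : g.n ≠ 0 := by
          rintro hn0
          rw [hn0] at hm
          simp at hm
          apply hg
          ext
          · exact hn0
          · exact_mod_cast hm
        refine ⟨(g.m : ℚ) / (g.n : ℚ), ?_⟩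
        have hnR : (g.n : ℝ) ≠ 0 := Int.cast_ne_zero.mpr hn
        push_cast
        field_simp
        linarith
      · -- ε = -1 : contradiction
        have h0 := key 0
        have h1 := key 1
        rw [hε] at h0 h1
        push_cast at h0 h1
        have ha : a = 0 := by linarith
        have hm : (g.m : ℝ) = 0 := by rw [ha] at h0; linarith
        have hm0 : g.m = 0 := by exact_mod_cast hm
        rw [hm0] at hε
        simp at hε
    · rintro ⟨q, rfl⟩
      refine ⟨⟨2 * q.den, 2 * q.num⟩, ?_, ?_, ⟨((2 * q.den : ℤ), (2 * q.num : ℤ)), ?_⟩⟩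
      · simp [KB.ext_iff, q.den_nz]
      · have hkey : ∀ x : ℝ, (q : ℝ) * (x + 2 * q.den) + b
            = 2 * q.num + ((q : ℝ) * x + b) := by
          intro x
          have : (q : ℝ) * q.den = q.num := by
            rw [← Rat.cast_intCast, ← Rat.cast_natCast, ← Rat.cast_mul]
            exact_mod_cast congrArg (Rat.cast : ℚ → ℝ) (Rat.mul_den_eq_num q)
          ring_nf
          ring_nf at this
          nlinarith [this]
        ext p
        constructor
        · rintro ⟨r, hr, rfl⟩
          simp only [KB.line, Set.mem_setOf_eq] at hr ⊢
          simp only [KB.smul]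
          push_cast
          simp only [Int.negOnePow_two_mul, Units.val_one, Int.cast_one, one_mul]
          rw [hr]
          push_cast
          have := hkey r.1
          push_cast at this
          linarith
        · intro hp
          refine ⟨(p.1 - 2 * q.den, p.2 - 2 * q.num), ?_, ?_⟩
          · simp only [KB.line, Set.mem_setOf_eq] at hp ⊢
            have := hkey (p.1 - 2 * q.den)
            push_cast at this ⊢
            rw [hp]
            linarith
          · simp only [KB.smul]
            push_cast
            simp only [Int.negOnePow_two_mul, Units.val_one, Int.cast_one, one_mul]
            ext <;> simp <;> ring
      · intro p hp
        simp only [KB.smul, Prod.ext_iff]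
        push_cast
        simp [Int.negOnePow_two_mul]
        exact ⟨by ring, by ring⟩
end

section
/- Let a = a₁/a₂ ∈ Q with gcd(a₁,a₂) = 1, a₁ ≠ 0, and b ∈ R. The stabilizer in Z⋊Z of the line ℓ(a,b) = {(x, ax+b) : x ∈ R} is the infinite cyclic group generated by (a₂,a₁) if a₁ is even, and by (2a₂,2a₁) if a₁ is odd. -/
lemma kb_pow_even (c d : ℤ) (hd : Even d) :
    ∀ k : ℕ, (KB.mk c d) ^ k = KB.mk (k * c) (k * d) := by
  intro k
  induction k with
  | zero => ext <;> simp
  | succ k ih =>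
    rw [pow_succ, ih]
    have : Even ((k : ℤ) * d) := hd.mul_left _
    ext <;> simp [Int.negOnePow_even _ this] <;> ring

lemma kb_zpow_even (c d : ℤ) (hd : Even d) :
    ∀ k : ℤ, (KB.mk c d) ^ k = KB.mk (k * c) (k * d) := by
  intro k
  induction k using Int.rec with
  | ofNat k => simpa using kb_pow_even c d hd k
  | negSucc k =>
    rw [zpow_negSucc, kb_pow_even c d hd, KB.inv_def]
    have h1 : Even (((k : ℤ) + 1) * d) := hd.mul_left _
    have h2 : (((1 : ℤ) - ((k : ℤ) + 1) * d).negOnePow : ℤ) = -1 := by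
      rw [Int.negOnePow_odd _ (odd_one.sub_even h1)]; rfl
    ext <;> simp only [Int.negSucc_eq] <;> push_cast <;> (try rw [h2]) <;> ring

lemma kb_mem_stab (a b : ℝ) (ha : a ≠ 0) (g : KB) :
    KB.smul g '' KB.line a b = KB.line a b ↔
      ((g.m.negOnePow : ℤ) = 1 ∧ (g.m : ℝ) = a * g.n) := by
  constructor
  · intro h
    have h0 : KB.smul g (0, b) ∈ KB.line a b := by
      rw [← h]; exact Set.mem_image_of_mem _ (by simp [KB.line])
    have h1 : KB.smul g (1, a + b) ∈ KB.line a b := by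
      rw [← h]; exact Set.mem_image_of_mem _ (by simp [KB.line])
    simp only [KB.smul, KB.line, Set.mem_setOf_eq] at h0 h1
    have hm : (g.m : ℝ) = a * g.n := by linarith [h0]
    have he : ((g.m.negOnePow : ℤ) : ℝ) = 1 := by
      have hh : a * ((g.m.negOnePow : ℤ) : ℝ) = a * 1 := by rw [mul_one]; nlinarith
      exact mul_left_cancel₀ ha hh
    exact ⟨by exact_mod_cast he, hm⟩
  · rintro ⟨he, hm⟩
    have he' : ((g.m.negOnePow : ℤ) : ℝ) = 1 := by exact_mod_cast he
    ext ⟨x, y⟩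
    simp only [Set.mem_image, KB.smul, KB.line, Set.mem_setOf_eq, he', one_mul, Prod.mk.injEq]
    constructor
    · rintro ⟨⟨p, q⟩, hpq, hx, hy⟩
      simp only at hpq hx hy
      subst hx; subst hy
      rw [hpq, hm]; ring
    · intro hxy
      exact ⟨(x - g.n, a * (x - g.n) + b), rfl, by ring, by rw [hxy, hm]; ring⟩

theorem kb_stabilizer_line (a₁ a₂ : ℤ) (hgcd : Int.gcd a₁ a₂ = 1) (h₁ : a₁ ≠ 0)
    (h₂ : a₂ ≠ 0) (b : ℝ) :
    (Even a₁ →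
      {g : KB | KB.smul g '' KB.line ((a₁ : ℝ) / (a₂ : ℝ)) b = KB.line ((a₁ : ℝ) / (a₂ : ℝ)) b} =
        (Subgroup.zpowers (KB.mk a₂ a₁) : Set KB)) ∧
    (Odd a₁ →
      {g : KB | KB.smul g '' KB.line ((a₁ : ℝ) / (a₂ : ℝ)) b = KB.line ((a₁ : ℝ) / (a₂ : ℝ)) b} =
        (Subgroup.zpowers (KB.mk (2 * a₂) (2 * a₁)) : Set KB)) := by
  have ha₁ : (a₁ : ℝ) ≠ 0 := Int.cast_ne_zero.mpr h₁
  have ha₂ : (a₂ : ℝ) ≠ 0 := Int.cast_ne_zero.mpr h₂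
  have ha : (a₁ : ℝ) / (a₂ : ℝ) ≠ 0 := div_ne_zero ha₁ ha₂
  -- integer form of the stabilizer condition
  have key : ∀ g : KB,
      KB.smul g '' KB.line ((a₁ : ℝ) / (a₂ : ℝ)) b = KB.line ((a₁ : ℝ) / (a₂ : ℝ)) b ↔
        (Even g.m ∧ a₂ * g.m = a₁ * g.n) := by
    intro g
    rw [kb_mem_stab _ _ ha g]
    have hiff : ((g.m.negOnePow : ℤ) = 1) ↔ Even g.m := by
      constructor
      · intro h; rw [← Int.negOnePow_eq_one_iff]; exact Units.ext h
      · intro h; rw [Int.negOnePow_even _ h]; rfl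
    rw [hiff]
    refine and_congr_right fun _ => ?_
    rw [div_mul_eq_mul_div, eq_div_iff ha₂]
    constructor
    · intro h
      have h' : ((a₂ * g.m : ℤ) : ℝ) = ((a₁ * g.n : ℤ) : ℝ) := by push_cast; linear_combination h
      exact_mod_cast h'
    · intro h
      have h' : ((a₂ * g.m : ℤ) : ℝ) = ((a₁ * g.n : ℤ) : ℝ) := by exact_mod_cast congrArg (Int.cast : ℤ → ℝ) h
      push_cast at h'
      linear_combination h' 
  -- divisibility: from a₂ * m = a₁ * n get m = k a₁, n = k a₂
  have factor : ∀ g : KB, a₂ * g.m = a₁ * g.n → ∃ k : ℤ, g.m = k * a₁ ∧ g.n = k * a₂ := by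
    intro g h
    have hcop : IsCoprime a₁ a₂ := Int.isCoprime_iff_gcd_eq_one.mpr hgcd
    have hdvd : a₁ ∣ g.m := by
      have : a₁ ∣ a₂ * g.m := ⟨g.n, h⟩
      exact hcop.dvd_of_dvd_mul_left this
    obtain ⟨k, hk⟩ := hdvd
    refine ⟨k, by rw [hk]; ring, ?_⟩
    have : a₁ * (k * a₂) = a₁ * g.n := by rw [← h, hk]; ring
    exact (mul_left_cancel₀ h₁ this).symm
  constructor
  · intro heven
    ext g
    rw [Set.mem_setOf_eq, key g, SetLike.mem_coe, Subgroup.mem_zpowers_iff]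
    constructor
    · rintro ⟨-, h⟩
      obtain ⟨k, hm, hn⟩ := factor g h
      exact ⟨k, by rw [kb_zpow_even _ _ heven]; ext <;> simp [hn, hm]⟩
    · rintro ⟨k, rfl⟩
      rw [kb_zpow_even _ _ heven]
      exact ⟨heven.mul_left _, by ring⟩
  · intro hodd
    have h2e : Even (2 * a₁) := even_two_mul a₁
    ext g
    rw [Set.mem_setOf_eq, key g, SetLike.mem_coe, Subgroup.mem_zpowers_iff]
    constructor
    · rintro ⟨hev, h⟩
      obtain ⟨k, hm, hn⟩ := factor g h
      have hke : Even k := by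
        rcases Int.even_or_odd k with hk | hk
        · exact hk
        · rw [hm] at hev
          exact (Int.not_odd_iff_even.mpr hev (hk.mul hodd)).elim
      obtain ⟨j, hj⟩ := hke
      exact ⟨j, by rw [kb_zpow_even _ _ h2e]; ext <;> simp [hn, hm, hj] <;> ring⟩
    · rintro ⟨k, rfl⟩
      rw [kb_zpow_even _ _ h2e]
      constructor
      · exact ⟨k * a₁, by ring⟩
      · simp; ring
end

section
/- For b ∈ R, the stabilizer in Z⋊Z of the vertical line ℓ(∞,b) = {(b,y) : y ∈ R} is the cyclic group generated by (2b,1) if 2b ∈ Z, and the cyclic group generated by (0,2) otherwise. -/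
namespace KB

lemma smul_vline (g : KB) (b : ℝ) :
    KB.smul g '' KB.vline b = KB.vline ((g.n : ℝ) + ((g.m.negOnePow : ℤ) : ℝ) * b) := by
  ext p
  constructor
  · rintro ⟨q, hq, rfl⟩
    simp only [KB.vline, Set.mem_setOf_eq] at hq ⊢
    simp [KB.smul, hq]
  · intro hp
    refine ⟨(b, p.2 - g.m), rfl, ?_⟩
    simp only [KB.vline, Set.mem_setOf_eq] at hp
    refine Prod.ext ?_ ?_ <;> simp [KB.smul, hp]

lemma vline_inj {b b' : ℝ} (h : KB.vline b = KB.vline b') : b = b' := by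
  have : (b, (0:ℝ)) ∈ KB.vline b := rfl
  rw [h] at this
  exact this

lemma mem_stab_iff (g : KB) (b : ℝ) :
    KB.smul g '' KB.vline b = KB.vline b ↔
      (g.n : ℝ) + ((g.m.negOnePow : ℤ) : ℝ) * b = b := by
  rw [smul_vline]
  constructor
  · exact vline_inj
  · intro h; rw [h]

lemma pow_c1 (c : ℤ) (z : ℤ) :
    (KB.mk c 1) ^ z = KB.mk (if 2 ∣ z then 0 else c) z := by
  induction z using Int.induction_on with
  | zero => simp
  | succ k ih =>
      rw [zpow_add_one, ih]
      rcases Int.even_or_odd (k : ℤ) with ⟨j, hj⟩ | ⟨j, hj⟩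
      · rw [if_pos (show 2 ∣ ((k:ℤ)) by omega)]
        ext
        · simp [Int.negOnePow_even _ ⟨j, hj⟩,
            if_neg (show ¬ 2 ∣ ((k:ℤ)+1) by omega)]
        · rfl
      · rw [if_neg (show ¬ 2 ∣ (k:ℤ) by omega)]
        ext
        · simp [Int.negOnePow_odd _ ⟨j, hj⟩,
            if_pos (show 2 ∣ ((k:ℤ)+1) by omega)]
        · rfl
  | pred k ih =>
      rw [zpow_sub_one, ih]
      rcases Int.even_or_odd (-(k : ℤ)) with ⟨j, hj⟩ | ⟨j, hj⟩
      · rw [if_pos (show 2 ∣ (-(k:ℤ)) by omega)]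
        ext
        · simp [Int.negOnePow_even _ ⟨j, hj⟩,
            if_neg (show ¬ 2 ∣ (-(k:ℤ)-1) by omega)]
        · simp; ring
      · rw [if_neg (show ¬ 2 ∣ (-(k:ℤ)) by omega)]
        ext
        · simp [Int.negOnePow_odd _ ⟨j, hj⟩,
            if_pos (show 2 ∣ (-(k:ℤ)-1) by omega)]
        · simp; ring

lemma pow_02 (z : ℤ) : (KB.mk 0 2) ^ z = KB.mk 0 (2 * z) := by
  induction z using Int.induction_on with
  | zero => simp
  | succ k ih => rw [zpow_add_one, ih]; ext <;> simp <;> ring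
  | pred k ih => rw [zpow_sub_one, ih]; ext <;> simp <;> ring

end KB

theorem kb_stabilizer_vertical (b : ℝ) :
    (∀ c : ℤ, (c : ℝ) = 2 * b →
      {g : KB | KB.smul g '' KB.vline b = KB.vline b} =
        (Subgroup.zpowers (KB.mk c 1) : Set KB)) ∧
    ((¬ ∃ c : ℤ, (c : ℝ) = 2 * b) →
      {g : KB | KB.smul g '' KB.vline b = KB.vline b} =
        (Subgroup.zpowers (KB.mk 0 2) : Set KB)) := by
  constructor
  · intro c hc
    ext g
    simp only [Set.mem_setOf_eq, KB.mem_stab_iff, SetLike.mem_coe,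
      Subgroup.mem_zpowers_iff, KB.pow_c1]
    constructor
    · intro h
      refine ⟨g.m, ?_⟩
      rcases Int.even_or_odd g.m with he | ho
      · rw [Int.negOnePow_even _ he] at h
        have : (g.n : ℝ) = 0 := by push_cast at h; linarith
        have hn : g.n = 0 := by exact_mod_cast this
        ext <;> simp [he.two_dvd, hn]
      · rw [Int.negOnePow_odd _ ho] at h
        have : (g.n : ℝ) = (c : ℝ) := by push_cast at h ⊢; linarith
        have hn : g.n = c := by exact_mod_cast this
        obtain ⟨j, hj⟩ := ho
        rw [if_neg (show ¬ 2 ∣ g.m by omega)]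
        ext <;> simp [hn]
    · rintro ⟨k, hk⟩
      rw [← hk]
      simp only
      rcases Int.even_or_odd k with he | ho
      · rw [if_pos he.two_dvd, Int.negOnePow_even _ he]; push_cast; ring
      · rw [if_neg (by rw [Int.two_dvd_ne_zero]; obtain ⟨j, hj⟩ := ho; omega),
          Int.negOnePow_odd _ ho, hc]
        push_cast; ring
  · intro hnc
    ext g
    simp only [Set.mem_setOf_eq, KB.mem_stab_iff, SetLike.mem_coe,
      Subgroup.mem_zpowers_iff, KB.pow_02]
    constructor
    · intro h
      rcases Int.even_or_odd g.m with he | ho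
      · rw [Int.negOnePow_even _ he] at h
        have : (g.n : ℝ) = 0 := by push_cast at h; linarith
        have hn : g.n = 0 := by exact_mod_cast this
        obtain ⟨j, hj⟩ := he
        exact ⟨j, by ext <;> simp [hn, hj]; ring⟩
      · rw [Int.negOnePow_odd _ ho] at h
        exact absurd ⟨g.n, by push_cast at h ⊢; linarith⟩ hnc
    · rintro ⟨k, hk⟩
      rw [← hk]
      have he : Even (2 * k) := ⟨k, two_mul k⟩
      simp [Int.negOnePow_even _ he]
end

section
/- Let H = ⟨(n,m)⟩ ⊂ Z⋊Z with m even and n ≠ 0. Then the set of H-fixed lines in the axis space is exactly {ℓ(m/n, b) : b ∈ R}, the set of lines of slope m/n. -/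
section Aux

lemma kb_zpow (n m : ℤ) (hm : Even m) (k : ℤ) :
    (KB.mk n m) ^ k = KB.mk (k * n) (k * m) := by
  have hpow : ∀ j : ℕ, (KB.mk n m) ^ j = KB.mk (j * n) (j * m) := by
    intro j
    induction j with
    | zero => ext <;> simp
    | succ j ih =>
      rw [pow_succ, ih]
      have : Even ((j : ℤ) * m) := hm.mul_left _
      ext <;> simp [Int.negOnePow_even _ this] <;> ring
  induction k using Int.rec with
  | ofNat j => simpa using hpow j
  | negSucc j =>
    rw [zpow_negSucc, hpow]
    have h2 : Odd (1 - (j + 1 : ℤ) * m) := by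
      have h1 : Even ((j + 1 : ℤ) * m) := hm.mul_left _
      rcases h1 with ⟨c, hc⟩
      exact ⟨-c, by omega⟩
    ext <;> simp [Int.negOnePow_odd _ h2, Int.negSucc_eq] <;> push_cast <;> ring

lemma kb_smul_line (N M : ℤ) (hM : Even M) (a b : ℝ) :
    KB.smul ⟨N, M⟩ '' KB.line a b = KB.line a (b + M - a * N) := by
  have h1 : ((M : ℤ).negOnePow : ℤ) = 1 := by rw [Int.negOnePow_even _ hM]; rfl
  ext ⟨x, y⟩
  simp only [KB.smul, KB.line, Set.mem_image, Set.mem_setOf_eq, Prod.mk.injEq, Prod.exists, h1]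
  constructor
  · rintro ⟨t, r, hr, hx, hy⟩
    subst hx hy; rw [hr]; ring
  · intro h
    exact ⟨x - N, y - M, by rw [h]; ring, by ring, by ring⟩

lemma kb_line_inj (a b₁ b₂ : ℝ) (h : KB.line a b₁ = KB.line a b₂) : b₁ = b₂ := by
  have : ((0 : ℝ), b₁) ∈ KB.line a b₁ := by simp [KB.line]
  rw [h] at this
  simpa [KB.line] using this

end Aux

theorem kb_fixed_lines_even (n m : ℤ) (hm : Even m) (hn : n ≠ 0) :
    (∀ a b : ℝ,
      (∀ g ∈ Subgroup.zpowers (KB.mk n m), KB.smul g '' KB.line a b = KB.line a b) ↔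
        a = (m : ℝ) / (n : ℝ)) ∧
    (∀ b : ℝ,
      ¬ ∀ g ∈ Subgroup.zpowers (KB.mk n m), KB.smul g '' KB.vline b = KB.vline b) := by
  have hn' : (n : ℝ) ≠ 0 := Int.cast_ne_zero.mpr hn
  constructor
  · intro a b
    constructor
    · intro h
      have := h _ (Subgroup.mem_zpowers _)
      rw [kb_smul_line n m hm] at this
      have := kb_line_inj _ _ _ this
      field_simp
      linarith
    · intro ha g hg
      obtain ⟨k, rfl⟩ := hg
      dsimp only
      rw [kb_zpow n m hm, kb_smul_line _ _ (hm.mul_left _)]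
      have : b + (↑(k * m) : ℝ) - a * (↑(k * n) : ℝ) = b := by
        push_cast
        rw [ha]
        field_simp
        ring
      rw [this]
  · intro b h
    have := h _ (Subgroup.mem_zpowers _)
    have hmem : ((b : ℝ), (0 : ℝ)) ∈ KB.vline b := by simp [KB.vline]
    have : KB.smul ⟨n, m⟩ (b, 0) ∈ KB.vline b := by
      rw [← this]; exact ⟨_, hmem, rfl⟩
    have h1 : ((m : ℤ).negOnePow : ℤ) = 1 := by rw [Int.negOnePow_even _ hm]; rfl
    simp [KB.smul, KB.vline, h1] at this
    exact hn this
end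

section
/- Let R = ⟨(n,m)⟩ ⊂ Z⋊Z with m odd. Then the only line in R² fixed by R is the vertical line ℓ(∞, n/2) = {(n/2, y) : y ∈ R}. -/
lemma kb_smul_one (p : ℝ × ℝ) : KB.smul 1 p = p := by
  simp [KB.smul]

lemma kb_smul_mul (a b : KB) (p : ℝ × ℝ) : KB.smul (a * b) p = KB.smul a (KB.smul b p) := by
  simp only [KB.smul, KB.mul_def, Int.negOnePow_add]
  push_cast
  rw [Prod.ext_iff]
  constructor <;> ring

lemma kb_image_mul (a b : KB) (S : Set (ℝ × ℝ)) :
    KB.smul (a * b) '' S = KB.smul a '' (KB.smul b '' S) := by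
  rw [← Set.image_comp]
  exact Set.image_congr' (fun p => kb_smul_mul a b p)

lemma kb_fix_zpow (g : KB) (S : Set (ℝ × ℝ)) (h : KB.smul g '' S = S) :
    ∀ x ∈ Subgroup.zpowers g, KB.smul x '' S = S := by
  have hinv : KB.smul g⁻¹ '' S = S := by
    conv_lhs => rw [← h]
    rw [← kb_image_mul, inv_mul_cancel]
    rw [show KB.smul 1 = id from funext kb_smul_one, Set.image_id]
  have hone : KB.smul 1 '' S = S := by
    rw [show KB.smul 1 = id from funext kb_smul_one, Set.image_id]
  rintro x ⟨k, rfl⟩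
  show KB.smul (g ^ k) '' S = S
  induction k using Int.induction_on with
  | zero => simpa using hone
  | succ k ih =>
    rw [zpow_add_one, kb_image_mul, h, ih]
  | pred k ih =>
    rw [zpow_sub_one, kb_image_mul, hinv, ih]

theorem kb_fixed_lines_odd (n m : ℤ) (hm : Odd m) :
    (∀ b : ℝ,
      (∀ g ∈ Subgroup.zpowers (KB.mk n m), KB.smul g '' KB.vline b = KB.vline b) ↔
        b = (n : ℝ) / 2) ∧
    (∀ a b : ℝ,
      ¬ ∀ g ∈ Subgroup.zpowers (KB.mk n m), KB.smul g '' KB.line a b = KB.line a b) := by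
  have hε : ((m.negOnePow : ℤ) : ℝ) = -1 := by
    rw [Int.negOnePow_odd m hm]; norm_num
  constructor
  · intro b
    constructor
    · intro h
      have h1 := h (KB.mk n m) (Subgroup.mem_zpowers _)
      have : KB.smul (KB.mk n m) (b, 0) ∈ KB.vline b := by
        rw [← h1]; exact Set.mem_image_of_mem _ (by simp [KB.vline])
      simp only [KB.smul, KB.vline, Set.mem_setOf_eq, hε] at this
      linarith
    · intro hb
      apply kb_fix_zpow
      ext p
      simp only [KB.vline, Set.mem_image, Set.mem_setOf_eq, KB.smul, hε]
      constructor
      · rintro ⟨q, hq, rfl⟩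
        simp only [hq]
        field_simp at hb ⊢
        linarith
      · intro hp
        refine ⟨(b, p.2 - m), rfl, ?_⟩
        rw [Prod.ext_iff]
        field_simp at hb
        refine ⟨?_, ?_⟩
        · show (n : ℝ) + -1 * b = p.1
          rw [hp]; linarith
        · show (m : ℝ) + (p.2 - m) = p.2
          ring
  · intro a b h
    have h1 := h (KB.mk n m) (Subgroup.mem_zpowers _)
    have p0 : KB.smul (KB.mk n m) (0, b) ∈ KB.line a b := by
      rw [← h1]; exact Set.mem_image_of_mem _ (by simp [KB.line])
    have p1 : KB.smul (KB.mk n m) (1, a + b) ∈ KB.line a b := by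
      rw [← h1]; exact Set.mem_image_of_mem _ (by simp [KB.line])
    simp only [KB.smul, KB.line, Set.mem_setOf_eq, hε] at p0 p1
    have ha : a = 0 := by linarith
    have hm0 : (m : ℝ) = 0 := by rw [ha] at p0; linarith
    have : m = 0 := by exact_mod_cast hm0
    rw [this] at hm
    exact (Int.not_even_iff_odd.mpr hm) Even.zero
end

section
/- In the Klein bottle group Z⋊Z, the normalizer of the subgroup K_n = ⟨(n,1)⟩ is K_n itself; moreover for g = (t₁,t₂), one has gK_ng⁻¹ = K_m where m = (-1)^{t₂}n + 2t₁. -/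
lemma kb_zpow_s19 (n : ℤ) : ∀ k : ℤ, (KB.mk n 1) ^ k = KB.mk (if Even k then 0 else n) k := by
  intro k
  induction k using Int.induction_on with
  | zero => simp
  | succ k ih =>
      rw [zpow_add_one, ih]
      by_cases h : Even (k : ℤ)
      · have h1 : ¬ Even ((k:ℤ)+1) := by simp only [Int.even_iff] at h ⊢; omega
        have h2 : ((k:ℤ)).negOnePow = 1 := Int.negOnePow_even _ h
        simp [h, h1, h2]
      · have h1 : Even ((k:ℤ)+1) := by simp only [Int.even_iff] at h ⊢; omega
        have h2 : ((k:ℤ)).negOnePow = -1 :=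
          Int.negOnePow_odd _ (Int.not_even_iff_odd.1 h)
        simp [h, h1, h2]
  | pred k ih =>
      rw [zpow_sub_one, ih]
      by_cases h : Even (k : ℤ)
      · have h0 : Even (-(k:ℤ)) := h.neg
        have h1 : ¬ Even (-(k:ℤ)-1) := by simp only [Int.even_iff] at h ⊢; omega
        have h2 : (-(k:ℤ)).negOnePow = 1 := Int.negOnePow_even _ h0
        refine KB.ext ?_ ?_ <;> simp [h0, h1, h2] <;> omega
      · have h0 : ¬ Even (-(k:ℤ)) := by simp only [Int.even_iff] at h ⊢; omega
        have h1 : Even (-(k:ℤ)-1) := by simp only [Int.even_iff] at h ⊢; omega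
        have h2 : (-(k:ℤ)).negOnePow = -1 :=
          Int.negOnePow_odd _ (Int.not_even_iff_odd.1 h0)
        refine KB.ext ?_ ?_ <;> simp [h0, h1, h2] <;> omega

lemma kb_conj (n : ℤ) (g : KB) :
    g * (KB.mk n 1) * g⁻¹ = KB.mk ((g.m.negOnePow : ℤ) * n + 2 * g.n) 1 := by
  have h2 : ((g.m + 1).negOnePow : ℤ) * ((1 - g.m).negOnePow : ℤ) = 1 := by
    rw [← Units.val_mul, ← Int.negOnePow_add]
    have : g.m + 1 + (1 - g.m) = 2 := by ring
    rw [this]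
    simp [Int.negOnePow_even 2 ⟨1, by ring⟩]
  ext
  · simp only [KB.mul_def, KB.inv_def]
    linear_combination g.n * h2
  · simp

theorem kb_normalizer_Kn (n t₁ t₂ : ℤ) :
    Subgroup.normalizer (Subgroup.zpowers (KB.mk n 1) : Set KB) = Subgroup.zpowers (KB.mk n 1) ∧
    Subgroup.map (MulAut.conj (KB.mk t₁ t₂)).toMonoidHom (Subgroup.zpowers (KB.mk n 1)) =
      Subgroup.zpowers (KB.mk ((t₂.negOnePow : ℤ) * n + 2 * t₁) 1) := by
  constructor
  · refine le_antisymm ?_ Subgroup.le_normalizer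
    intro g hg
    have h1 : g * (KB.mk n 1) * g⁻¹ ∈ Subgroup.zpowers (KB.mk n 1) :=
      (Subgroup.mem_normalizer_iff.1 hg _).1 (Subgroup.mem_zpowers _)
    obtain ⟨k, hk⟩ := Subgroup.mem_zpowers_iff.1 h1
    rw [kb_zpow_s19, kb_conj] at hk
    have hkm : k = 1 := congrArg KB.m hk
    subst hkm
    have hodd : ¬ Even (1 : ℤ) := by decide
    rw [if_neg hodd] at hk
    have hn1 : n = (g.m.negOnePow : ℤ) * n + 2 * g.n := congrArg KB.n hk
    refine Subgroup.mem_zpowers_iff.2 ⟨g.m, ?_⟩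
    rw [kb_zpow_s19]
    by_cases h : Even g.m
    · have h2 : (g.m.negOnePow : ℤ) = 1 := by
        rw [Int.negOnePow_even _ h]; rfl
      rw [h2] at hn1
      ext
      · simp [h]; omega
      · rfl
    · have h2 : (g.m.negOnePow : ℤ) = -1 := by
        rw [Int.negOnePow_odd _ (Int.not_even_iff_odd.1 h)]; rfl
      rw [h2] at hn1
      ext
      · simp [h]; omega
      · rfl
  · rw [MonoidHom.map_zpowers]
    congr 1
    have : (MulAut.conj (KB.mk t₁ t₂)).toMonoidHom (KB.mk n 1)
        = (KB.mk t₁ t₂) * (KB.mk n 1) * (KB.mk t₁ t₂)⁻¹ := rfl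
    rw [this, kb_conj]
end
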